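/- arXiv:1507.06210 — 2 statements merged into one kernel-verified Lean document; each statement's English description precedes it below -/
import Mathlib

section
/- For any nonempty closed sets A, B ⊆ ℝⁿ, vectors x, y ∈ ℝⁿ, and any ρ ≥ 0, the truncated set distance satisfies d_ρ(A + x, B + y) ≤ d_{ρ+|x|}(A, B) + |x − y|, where A + x := {a + x : a ∈ A}. -/
/-- Truncated set distance `d_ρ(A,B) = sup_{|z| ≤ ρ} |d(z,A) − d(z,B)|`. -/
noncomputable def dTrunc {E : Type*} [NormedAddCommGroup E] (A B : Set E) (ρ : ℝ) : ℝ :=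
  sSup ((fun z => |Metric.infDist z A - Metric.infDist z B|) '' Metric.closedBall (0 : E) ρ)

lemma infDist_translate {E : Type*} [NormedAddCommGroup E] (C : Set E) (v z : E) :
    Metric.infDist z ((fun a => a + v) '' C) = Metric.infDist (z - v) C := by
  have h := Metric.infDist_image (Φ := fun a => a + v) (x := z - v) (t := C)
    (IsometryEquiv.addRight v).isometry
  simpa using h

lemma abs_infDist_sub_le {E : Type*} [NormedAddCommGroup E] (C : Set E) (a b : E) :
    |Metric.infDist a C - Metric.infDist b C| ≤ dist a b := by
  rw [abs_sub_le_iff]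
  constructor
  · linarith [Metric.infDist_le_infDist_add_dist (x := a) (y := b) (s := C)]
  · linarith [Metric.infDist_le_infDist_add_dist (x := b) (y := a) (s := C), dist_comm a b]

theorem stmt3 (n : ℕ) (A B : Set (EuclideanSpace ℝ (Fin n)))
    (hAne : A.Nonempty) (hAcl : IsClosed A) (hBne : B.Nonempty) (hBcl : IsClosed B)
    (x y : EuclideanSpace ℝ (Fin n)) (ρ : ℝ) (hρ : 0 ≤ ρ) :
    dTrunc ((fun a => a + x) '' A) ((fun b => b + y) '' B) ρ ≤
      dTrunc A B (ρ + ‖x‖) + ‖x - y‖ := by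
  set r := ρ + ‖x‖ with hr
  -- boundedness of the set defining dTrunc A B r
  have hbdd : BddAbove ((fun z => |Metric.infDist z A - Metric.infDist z B|) ''
      Metric.closedBall (0 : EuclideanSpace ℝ (Fin n)) r) := by
    refine ⟨Metric.infDist 0 A + Metric.infDist 0 B + 2 * r, ?_⟩
    rintro t ⟨z, hz, rfl⟩
    have hz' : ‖z‖ ≤ r := by simpa [Metric.mem_closedBall, dist_zero_right] using hz
    have hA := abs_infDist_sub_le A z 0
    have hB := abs_infDist_sub_le B z 0
    rw [dist_zero_right] at hA hB
    have h1 : Metric.infDist z A ≤ Metric.infDist 0 A + r := by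
      have := (abs_le.mp hA).2; linarith
    have h2 : Metric.infDist z B ≤ Metric.infDist 0 B + r := by
      have := (abs_le.mp hB).2; linarith
    have h3 : 0 ≤ Metric.infDist z A := Metric.infDist_nonneg
    have h4 : 0 ≤ Metric.infDist z B := Metric.infDist_nonneg
    rw [abs_le]
    constructor <;> nlinarith [Metric.infDist_nonneg (x := (0:EuclideanSpace ℝ (Fin n))) (s := A),
      Metric.infDist_nonneg (x := (0:EuclideanSpace ℝ (Fin n))) (s := B)]
  have hRHS0 : 0 ≤ dTrunc A B r := by
    have h0 : (0 : EuclideanSpace ℝ (Fin n)) ∈ Metric.closedBall (0 : EuclideanSpace ℝ (Fin n)) r := by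
      simp [Metric.mem_closedBall]; positivity
    have := le_csSup hbdd ⟨0, h0, rfl⟩
    exact le_trans (abs_nonneg _) this
  apply Real.sSup_le
  · rintro t ⟨z, hz, rfl⟩
    have hz' : ‖z‖ ≤ ρ := by simpa [Metric.mem_closedBall, dist_zero_right] using hz
    simp only [infDist_translate]
    have hmem : z - x ∈ Metric.closedBall (0 : EuclideanSpace ℝ (Fin n)) r := by
      simp only [Metric.mem_closedBall, dist_zero_right]
      calc ‖z - x‖ ≤ ‖z‖ + ‖x‖ := norm_sub_le z x
        _ ≤ r := by rw [hr]; linarith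
    have h1 : |Metric.infDist (z - x) A - Metric.infDist (z - x) B| ≤ dTrunc A B r :=
      le_csSup hbdd ⟨z - x, hmem, rfl⟩
    have h2 : |Metric.infDist (z - x) B - Metric.infDist (z - y) B| ≤ ‖x - y‖ := by
      have := abs_infDist_sub_le B (z - x) (z - y)
      have hd : dist (z - x) (z - y) = ‖x - y‖ := by
        rw [dist_eq_norm]
        rw [show z - x - (z - y) = -(x - y) by abel, norm_neg]
      linarith [this, hd.le]
    calc |Metric.infDist (z - x) A - Metric.infDist (z - y) B|
        ≤ |Metric.infDist (z - x) A - Metric.infDist (z - x) B| +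
          |Metric.infDist (z - x) B - Metric.infDist (z - y) B| := abs_sub_le _ _ _
      _ ≤ dTrunc A B r + ‖x - y‖ := add_le_add h1 h2
  · positivity
end

section
/- Let A, B ⊆ ℝⁿ be nonempty closed sets and x, y ∈ ℝⁿ with |x| ≤ |y|. Then the integrated set distance satisfies 𝐝(A + x, B + y) ≤ e^{|x|} · 𝐝(A, B) + |x − y|, where 𝐝(A,B) := ∫₀^∞ d_ρ(A,B) e^{−ρ} dρ. -/
/-- Integrated set distance `𝐝(A,B) = ∫₀^∞ d_ρ(A,B) e^{−ρ} dρ`. -/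
noncomputable def dInt {E : Type*} [NormedAddCommGroup E] (A B : Set E) : ℝ :=
  ∫ ρ in Set.Ioi (0 : ℝ), dTrunc A B ρ * Real.exp (-ρ)

open Metric MeasureTheory Real Set

section IoiTranslation

variable {F : Type*} [NormedAddCommGroup F]

lemma integrableOn_Ioi_comp_add_right_iff {f : ℝ → F} (a c : ℝ) :
    IntegrableOn (fun x => f (x + c)) (Ioi a) ↔ IntegrableOn f (Ioi (a + c)) := by
  have h := (measurePreserving_add_right volume c).integrableOn_comp_preimage
    (measurableEmbedding_addRight c) (f := f) (s := Ioi (a + c))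
  rwa [preimage_add_const_Ioi, add_sub_cancel_right] at h

lemma setIntegral_Ioi_comp_add_right [NormedSpace ℝ F] (f : ℝ → F) (a c : ℝ) :
    ∫ x in Ioi a, f (x + c) = ∫ x in Ioi (a + c), f x := by
  have h := (measurePreserving_add_right volume c).setIntegral_preimage_emb
    (measurableEmbedding_addRight c) f (Ioi (a + c))
  rwa [preimage_add_const_Ioi, add_sub_cancel_right] at h

end IoiTranslation

lemma integrableOn_mul_exp_neg_Ioi_zero : IntegrableOn (fun x : ℝ => x * exp (-x)) (Ioi 0) := by
  refine (GammaIntegral_convergent two_pos).congr_fun (fun x _ => ?_) measurableSet_Ioi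
  norm_num [mul_comm]

section Metric

variable {α : Type*} [PseudoMetricSpace α]

lemma abs_infDist_sub_infDist_le (s : Set α) (z w : α) :
    |infDist z s - infDist w s| ≤ dist z w := by
  simpa [Real.dist_eq] using (lipschitz_infDist_pt s).dist_le_mul z w

lemma abs_infDist_sub_infDist_le_add (A B : Set α) (z w : α) :
    |infDist z A - infDist z B| ≤ |infDist w A - infDist w B| + 2 * dist z w := by
  have h := ((lipschitz_infDist_pt A).sub (lipschitz_infDist_pt B)).dist_le_mul z w
  rw [Real.dist_eq] at h
  norm_num at h
  linarith [abs_sub_abs_le_abs_sub (infDist z A - infDist z B) (infDist w A - infDist w B)]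

end Metric

lemma infDist_image_add_right {E : Type*} [NormedAddCommGroup E] (s : Set E) (x z : E) :
    infDist z ((· + x) '' s) = infDist (z - x) s := by
  simpa using infDist_image (isometry_add_right x) (x := z - x) (t := s)

section dTrunc

variable {E : Type*} [NormedAddCommGroup E] (A B : Set E)

lemma bddAbove_dTrunc_image (ρ : ℝ) :
    BddAbove ((fun z => |infDist z A - infDist z B|) '' closedBall (0 : E) ρ) := by
  refine ⟨|infDist 0 A - infDist 0 B| + 2 * ρ, ?_⟩
  rintro _ ⟨z, hz, rfl⟩
  have hz : dist z 0 ≤ ρ := hz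
  linarith [abs_infDist_sub_infDist_le_add A B z 0]

lemma abs_infDist_sub_infDist_le_dTrunc {ρ : ℝ} {z : E} (hz : ‖z‖ ≤ ρ) :
    |infDist z A - infDist z B| ≤ dTrunc A B ρ :=
  le_csSup (bddAbove_dTrunc_image A B ρ) (mem_image_of_mem _ (by simpa using hz))

lemma dTrunc_le_of_forall {ρ C : ℝ} (hρ : 0 ≤ ρ)
    (h : ∀ z : E, ‖z‖ ≤ ρ → |infDist z A - infDist z B| ≤ C) :
    dTrunc A B ρ ≤ C := by
  refine csSup_le ⟨_, mem_image_of_mem _ (by simpa using hρ : (0 : E) ∈ closedBall 0 ρ)⟩ ?_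
  rintro _ ⟨z, hz, rfl⟩
  exact h z (by simpa using hz)

lemma dTrunc_nonneg (ρ : ℝ) : 0 ≤ dTrunc A B ρ := by
  rcases lt_or_ge ρ 0 with hρ | hρ
  · simp [dTrunc, closedBall_eq_empty.mpr hρ]
  · exact (abs_nonneg _).trans
      (abs_infDist_sub_infDist_le_dTrunc A B (z := 0) (by simpa using hρ))

lemma dTrunc_mono : Monotone (dTrunc A B) := by
  intro ρ₁ ρ₂ h
  rcases lt_or_ge ρ₁ 0 with hρ | hρ
  · simpa [dTrunc, closedBall_eq_empty.mpr hρ] using dTrunc_nonneg A B ρ₂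
  · exact dTrunc_le_of_forall A B hρ fun z hz =>
      abs_infDist_sub_infDist_le_dTrunc A B (hz.trans h)

lemma dTrunc_le_add_two_mul {ρ : ℝ} (hρ : 0 ≤ ρ) :
    dTrunc A B ρ ≤ |infDist 0 A - infDist 0 B| + 2 * ρ :=
  dTrunc_le_of_forall A B hρ fun z hz => by
    linarith [abs_infDist_sub_infDist_le_add A B z 0, dist_zero_right z]

lemma integrableOn_dTrunc_mul_exp_neg :
    IntegrableOn (fun ρ => dTrunc A B ρ * exp (-ρ)) (Ioi 0) := by
  set C := |infDist (0 : E) A - infDist 0 B|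
  have hdom : IntegrableOn (fun ρ => C * exp (-ρ) + 2 * (ρ * exp (-ρ))) (Ioi 0) :=
    ((integrableOn_exp_neg_Ioi 0).const_mul C).add
      (integrableOn_mul_exp_neg_Ioi_zero.const_mul 2)
  refine hdom.mono'
    ((dTrunc_mono A B).measurable.mul (by fun_prop)).aestronglyMeasurable ?_
  refine (ae_restrict_iff' measurableSet_Ioi).mpr (.of_forall fun ρ (hρ : 0 < ρ) => ?_)
  rw [Real.norm_of_nonneg (mul_nonneg (dTrunc_nonneg A B ρ) (exp_pos _).le)]
  nlinarith [dTrunc_le_add_two_mul A B hρ.le, exp_pos (-ρ)]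

lemma dTrunc_image_add_le (x y : E) {ρ : ℝ} (hρ : 0 ≤ ρ) :
    dTrunc ((· + x) '' A) ((· + y) '' B) ρ ≤ dTrunc A B (ρ + ‖x‖) + ‖x - y‖ := by
  refine dTrunc_le_of_forall _ _ hρ fun z hz => ?_
  rw [infDist_image_add_right, infDist_image_add_right]
  have hA : |infDist (z - x) A - infDist (z - x) B| ≤ dTrunc A B (ρ + ‖x‖) :=
    abs_infDist_sub_infDist_le_dTrunc A B ((norm_sub_le z x).trans (by linarith))
  have hB : |infDist (z - x) B - infDist (z - y) B| ≤ ‖x - y‖ := by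
    have h := abs_infDist_sub_infDist_le B (z - x) (z - y)
    rwa [dist_sub_left, dist_eq_norm] at h
  linarith [abs_sub_le (infDist (z - x) A) (infDist (z - x) B) (infDist (z - y) B)]

lemma dTrunc_add_mul_exp_neg_eq (c ρ : ℝ) :
    dTrunc A B (ρ + c) * exp (-ρ) = exp c * (dTrunc A B (ρ + c) * exp (-(ρ + c))) := by
  rw [mul_left_comm, ← exp_add]
  ring_nf

lemma integrableOn_dTrunc_add_mul_exp_neg {c : ℝ} (hc : 0 ≤ c) :
    IntegrableOn (fun ρ => dTrunc A B (ρ + c) * exp (-ρ)) (Ioi 0) := by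
  simp_rw [dTrunc_add_mul_exp_neg_eq]
  refine Integrable.const_mul ((integrableOn_Ioi_comp_add_right_iff
    (f := fun ρ => dTrunc A B ρ * exp (-ρ)) 0 c).mpr ?_) _
  rw [zero_add]
  exact (integrableOn_dTrunc_mul_exp_neg A B).mono_set (Ioi_subset_Ioi hc)

lemma integral_dTrunc_add_mul_exp_neg_le {c : ℝ} (hc : 0 ≤ c) :
    ∫ ρ in Ioi 0, dTrunc A B (ρ + c) * exp (-ρ) ≤ exp c * dInt A B := by
  simp_rw [dTrunc_add_mul_exp_neg_eq]
  rw [integral_const_mul, setIntegral_Ioi_comp_add_right (fun ρ => dTrunc A B ρ * exp (-ρ)),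
    zero_add, dInt]
  refine mul_le_mul_of_nonneg_left ?_ (exp_pos c).le
  refine setIntegral_mono_set (integrableOn_dTrunc_mul_exp_neg A B) ?_
    (Ioi_subset_Ioi hc).eventuallyLE
  exact .of_forall fun ρ => mul_nonneg (dTrunc_nonneg A B ρ) (exp_pos _).le

lemma dInt_image_add_le (x y : E) :
    dInt ((· + x) '' A) ((· + y) '' B) ≤ exp ‖x‖ * dInt A B + ‖x - y‖ := by
  have hshift := integrableOn_dTrunc_add_mul_exp_neg A B (norm_nonneg x)
  have hexp := (integrableOn_exp_neg_Ioi 0).const_mul ‖x - y‖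
  have hpointwise : ∀ ρ ∈ Ioi (0 : ℝ),
      dTrunc ((· + x) '' A) ((· + y) '' B) ρ * exp (-ρ) ≤
        dTrunc A B (ρ + ‖x‖) * exp (-ρ) + ‖x - y‖ * exp (-ρ) := fun ρ hρ => by
    rw [← add_mul]
    exact mul_le_mul_of_nonneg_right (dTrunc_image_add_le A B x y hρ.le) (exp_pos _).le
  calc dInt ((· + x) '' A) ((· + y) '' B)
      ≤ ∫ ρ in Ioi 0, dTrunc A B (ρ + ‖x‖) * exp (-ρ) + ‖x - y‖ * exp (-ρ) :=
        setIntegral_mono_on (integrableOn_dTrunc_mul_exp_neg _ _) (hshift.add hexp)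
          measurableSet_Ioi hpointwise
    _ = (∫ ρ in Ioi 0, dTrunc A B (ρ + ‖x‖) * exp (-ρ)) + ‖x - y‖ := by
        rw [integral_add hshift hexp, integral_const_mul, integral_exp_neg_Ioi_zero, mul_one]
    _ ≤ exp ‖x‖ * dInt A B + ‖x - y‖ := by
        gcongr
        exact integral_dTrunc_add_mul_exp_neg_le A B (norm_nonneg x)

end dTrunc

theorem stmt4_general (n : ℕ) (A B : Set (EuclideanSpace ℝ (Fin n)))
    (x y : EuclideanSpace ℝ (Fin n)) :
    dInt ((fun a => a + x) '' A) ((fun b => b + y) '' B) ≤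
      Real.exp ‖x‖ * dInt A B + ‖x - y‖ :=
  dInt_image_add_le A B x y

theorem stmt4 (n : ℕ) (A B : Set (EuclideanSpace ℝ (Fin n)))
    (hAne : A.Nonempty) (hAcl : IsClosed A) (hBne : B.Nonempty) (hBcl : IsClosed B)
    (x y : EuclideanSpace ℝ (Fin n)) (hxy : ‖x‖ ≤ ‖y‖) :
    dInt ((fun a => a + x) '' A) ((fun b => b + y) '' B) ≤
      Real.exp ‖x‖ * dInt A B + ‖x - y‖ :=
  stmt4_general n A B x y
end
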